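/- Let k₁ ≥ k₂ ≥ 1 be integers, let T be a finite index set of test observations, let c : T → Fin k₁ assign to each test observation its correct label, and let s : T × Fin k₁ → ℝ be scores such that for each t ∈ T the function j ↦ s(t, j) is injective. For t ∈ T set R_t = |{j : s(t, j) ≤ s(t, c(t))}|. Then the double sum over all subsets S ⊆ Fin k₁ with |S| = k₂ of the number of test observations t with c(t) ∈ S and s(t, c(t)) = max_{j ∈ S} s(t, j) equals Σ_{t ∈ T} C(R_t − 1, k₂ − 1). -/
import Mathlib


open Finset

/-- **Double-counting identity behind the subsampled average test accuracy `ATA_{k₂}`.**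
Summing, over all size-`k₂` subsets `S` of the `k₁` labels, the number of test observations
whose correct label lies in `S` and attains the maximal score within `S`, equals
`Σ_t C(R_t - 1, k₂ - 1)`, where `R_t` is the rank of the correct label of `t`. -/
theorem subsampled_accuracy_double_count
    {τ : Type*} [DecidableEq τ]
    (k₁ k₂ : ℕ) (hk₂ : 1 ≤ k₂) (hk : k₂ ≤ k₁)
    (T : Finset τ) (c : τ → Fin k₁) (s : τ → Fin k₁ → ℝ)
    (hs : ∀ t ∈ T, Function.Injective (s t))
    (R : τ → ℕ)
    (hR : ∀ t, R t = (Finset.univ.filter (fun j => s t j ≤ s t (c t))).card) :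
    ∑ S ∈ Finset.powersetCard k₂ (Finset.univ : Finset (Fin k₁)),
        (T.filter (fun t => c t ∈ S ∧ ∀ j ∈ S, s t j ≤ s t (c t))).card
      = ∑ t ∈ T, Nat.choose (R t - 1) (k₂ - 1) := by
  classical
  simp only [Finset.card_filter]
  rw [Finset.sum_comm]
  refine Finset.sum_congr rfl fun t ht => ?_
  rw [← Finset.card_filter]
  set A := Finset.univ.filter (fun j => s t j ≤ s t (c t)) with hA
  have hcA : c t ∈ A := by simp [hA]
  have key : (Finset.powersetCard k₂ (Finset.univ : Finset (Fin k₁))).filter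
      (fun S => c t ∈ S ∧ ∀ j ∈ S, s t j ≤ s t (c t))
      = (Finset.powersetCard k₂ A).filter (fun S => c t ∈ S) := by
    ext S
    simp only [Finset.mem_filter, Finset.mem_powersetCard, hA, Finset.subset_iff,
      Finset.mem_filter, Finset.mem_univ, true_and]
    tauto
  rw [key]
  have hbij : ((Finset.powersetCard k₂ A).filter (fun S => c t ∈ S)).card
      = (Finset.powersetCard (k₂ - 1) (A.erase (c t))).card := by
    refine Finset.card_bij (fun S _ => S.erase (c t)) ?_ ?_ ?_
    · intro S hS
      simp only [Finset.mem_filter, Finset.mem_powersetCard] at hS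
      obtain ⟨⟨hSA, hScard⟩, hcS⟩ := hS
      rw [Finset.mem_powersetCard]
      constructor
      · exact Finset.erase_subset_erase _ hSA
      · rw [Finset.card_erase_of_mem hcS, hScard]
    · intro S₁ h₁ S₂ h₂ h
      simp only [Finset.mem_filter] at h₁ h₂
      have h' : S₁.erase (c t) = S₂.erase (c t) := h
      rw [← Finset.insert_erase h₁.2, ← Finset.insert_erase h₂.2, h']
    · intro S' hS'
      rw [Finset.mem_powersetCard] at hS'
      refine ⟨insert (c t) S', ?_, ?_⟩
      · simp only [Finset.mem_filter, Finset.mem_powersetCard]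
        have hnot : c t ∉ S' := fun h => Finset.notMem_erase _ _ (hS'.1 h)
        refine ⟨⟨?_, ?_⟩, Finset.mem_insert_self _ _⟩
        · exact Finset.insert_subset hcA (hS'.1.trans (Finset.erase_subset _ _))
        · rw [Finset.card_insert_of_notMem hnot, hS'.2]
          omega
      · show (insert (c t) S').erase (c t) = S'
        rw [Finset.erase_insert (fun h => Finset.notMem_erase _ _ (hS'.1 h))]
  rw [hbij, Finset.card_powersetCard, Finset.card_erase_of_mem hcA, hR]
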